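/- arXiv:1411.3626 — 2 statements merged into one kernel-verified Lean document; each statement's English description precedes it below -/
import Mathlib

section
/- The normalized R-matrix of the XXZ model satisfies the quantum Yang–Baxter equation with spectral parameters: for all q, z, w ∈ ℂ with q ≠ 0, z ≠ q⁻², w ≠ q⁻², and zw ≠ q⁻², one has R₁₂(z) · R₁₃(zw) · R₂₃(w) = R₂₃(w) · R₁₃(zw) · R₁₂(z) as linear endomorphisms of ℂ² ⊗ ℂ² ⊗ ℂ² (equivalently, as matrices indexed by Fin 2 × Fin 2 × Fin 2). -/
open Matrix

/-- The normalized R-matrix of the XXZ model, in the ordered basis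
`(e₀⊗e₀, e₀⊗e₁, e₁⊗e₀, e₁⊗e₁)` of `ℂ² ⊗ ℂ²`, indexed by `Fin 2 × Fin 2`. -/
noncomputable def xxzR (q z : ℂ) : Matrix (Fin 2 × Fin 2) (Fin 2 × Fin 2) ℂ :=
  Matrix.of fun p p' =>
    if p.1 = p.2 then (if p' = p then 1 else 0)
    else if p' = p then q⁻¹ * (z - 1) / (z - (q ^ 2)⁻¹)
    else if p' = (p.2, p.1) then
      (if p.1 = 0 then z * (1 - (q ^ 2)⁻¹) / (z - (q ^ 2)⁻¹)
       else (1 - (q ^ 2)⁻¹) / (z - (q ^ 2)⁻¹))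
    else 0

/-- `R₁₂`: `R` acting on the first and second tensor factors of `ℂ² ⊗ ℂ² ⊗ ℂ²`. -/
def lift12 (R : Matrix (Fin 2 × Fin 2) (Fin 2 × Fin 2) ℂ) :
    Matrix (Fin 2 × Fin 2 × Fin 2) (Fin 2 × Fin 2 × Fin 2) ℂ :=
  Matrix.of fun i j => R (i.1, i.2.1) (j.1, j.2.1) * (if i.2.2 = j.2.2 then 1 else 0)

/-- `R₁₃`: `R` acting on the first and third tensor factors of `ℂ² ⊗ ℂ² ⊗ ℂ²`. -/
def lift13 (R : Matrix (Fin 2 × Fin 2) (Fin 2 × Fin 2) ℂ) :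
    Matrix (Fin 2 × Fin 2 × Fin 2) (Fin 2 × Fin 2 × Fin 2) ℂ :=
  Matrix.of fun i j => R (i.1, i.2.2) (j.1, j.2.2) * (if i.2.1 = j.2.1 then 1 else 0)

/-- `R₂₃`: `R` acting on the second and third tensor factors of `ℂ² ⊗ ℂ² ⊗ ℂ²`. -/
def lift23 (R : Matrix (Fin 2 × Fin 2) (Fin 2 × Fin 2) ℂ) :
    Matrix (Fin 2 × Fin 2 × Fin 2) (Fin 2 × Fin 2 × Fin 2) ℂ :=
  Matrix.of fun i j => R (i.2.1, i.2.2) (j.2.1, j.2.2) * (if i.1 = j.1 then 1 else 0)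

/-- The unnormalized (polynomial) XXZ R-matrix: `(z - r²) • xxzR` with `r = q⁻¹`. -/
noncomputable def xxzN (r z : ℂ) : Matrix (Fin 2 × Fin 2) (Fin 2 × Fin 2) ℂ :=
  Matrix.of fun p p' =>
    if p.1 = p.2 then (if p' = p then z - r ^ 2 else 0)
    else if p' = p then r * (z - 1)
    else if p' = (p.2, p.1) then
      (if p.1 = 0 then z * (1 - r ^ 2) else (1 - r ^ 2))
    else 0

lemma lift12_smul (a : ℂ) (R) : lift12 (a • R) = a • lift12 R := by
  ext i j; simp [lift12, Matrix.smul_apply, mul_assoc]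

lemma lift13_smul (a : ℂ) (R) : lift13 (a • R) = a • lift13 R := by
  ext i j; simp [lift13, Matrix.smul_apply, mul_assoc]

lemma lift23_smul (a : ℂ) (R) : lift23 (a • R) = a • lift23 R := by
  ext i j; simp [lift23, Matrix.smul_apply, mul_assoc]

lemma xxzR_eq_smul (q z : ℂ) (hz : z - (q ^ 2)⁻¹ ≠ 0) :
    xxzR q z = (z - (q ^ 2)⁻¹)⁻¹ • xxzN q⁻¹ z := by
  have h : z - q⁻¹ ^ 2 ≠ 0 := by rwa [inv_pow]
  ext p p'
  simp only [xxzR, xxzN, Matrix.smul_apply, Matrix.of_apply, smul_eq_mul, inv_pow]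
  split_ifs <;> simp [div_eq_inv_mul, inv_mul_cancel₀ hz, mul_comm]

set_option maxHeartbeats 6400000 in
lemma poly_ybe (r z w : ℂ) :
    lift12 (xxzN r z) * lift13 (xxzN r (z * w)) * lift23 (xxzN r w) =
      lift23 (xxzN r w) * lift13 (xxzN r (z * w)) * lift12 (xxzN r z) := by
  ext ⟨i1, i2, i3⟩ ⟨j1, j2, j3⟩
  simp only [Matrix.mul_apply, lift12, lift13, lift23, xxzN, Matrix.of_apply,
    Fintype.sum_prod_type, Fin.sum_univ_two]
  fin_cases i1 <;> fin_cases i2 <;> fin_cases i3 <;> fin_cases j1 <;> fin_cases j2 <;>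
    fin_cases j3 <;>
  · simp (config := { decide := true }) only [ite_true, ite_false, one_mul, mul_one,
      mul_zero, zero_mul, add_zero, zero_add]
    try ring

/-- The normalized XXZ R-matrix satisfies the quantum Yang–Baxter equation with
spectral parameters. -/
theorem xxz_quantum_yang_baxter (q z w : ℂ) (hq : q ≠ 0)
    (hz : z ≠ (q ^ 2)⁻¹) (hw : w ≠ (q ^ 2)⁻¹) (hzw : z * w ≠ (q ^ 2)⁻¹) :
    lift12 (xxzR q z) * lift13 (xxzR q (z * w)) * lift23 (xxzR q w) =
      lift23 (xxzR q w) * lift13 (xxzR q (z * w)) * lift12 (xxzR q z) := by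
  have hz' : z - (q ^ 2)⁻¹ ≠ 0 := sub_ne_zero.mpr hz
  have hw' : w - (q ^ 2)⁻¹ ≠ 0 := sub_ne_zero.mpr hw
  have hzw' : z * w - (q ^ 2)⁻¹ ≠ 0 := sub_ne_zero.mpr hzw
  rw [xxzR_eq_smul q z hz', xxzR_eq_smul q w hw', xxzR_eq_smul q (z * w) hzw',
    lift12_smul, lift13_smul, lift23_smul]
  simp only [Matrix.smul_mul, Matrix.mul_smul, poly_ybe, smul_smul]
  congr 1
  ring
end

section
/- Conjugation-type Yang–Baxter relations imply commutation of transfer matrices: let n, m be positive integers, let A, B be complex matrices indexed by (Fin n × Fin m) × (Fin n × Fin m), and let X be an invertible complex matrix indexed by (Fin n × Fin n) × (Fin n × Fin n). Suppose that, as matrices indexed by (Fin n × Fin n × Fin m) × (Fin n × Fin n × Fin m), one has X₁₂ · A₁₃ · B₂₃ = B₂₃ · A₁₃ · X₁₂, where X₁₂ acts as X on the first two factors and the identity on the third, A₁₃ acts as A on the first and third factors and the identity on the second, and B₂₃ acts as B on the last two factors and the identity on the first. Then the partial traces over the first factor, T_A and T_B, defined by (T_A)_{w,w'} = Σ_{v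 ∈ Fin n} A_{(v,w),(v,w')} and likewise for T_B, commute: T_A · T_B = T_B · T_A as m × m complex matrices. -/
open Matrix

/-- The partial trace over the first tensor factor of an endomorphism of `ℂⁿ ⊗ ℂᵐ`. -/
noncomputable def partialTrace₁ {n m : ℕ}
    (A : Matrix (Fin n × Fin m) (Fin n × Fin m) ℂ) : Matrix (Fin m) (Fin m) ℂ :=
  Matrix.of fun w w' => ∑ v : Fin n, A (v, w) (v, w')

namespace TMaux
variable {n m : ℕ}

/-- Partial trace over the first two tensor factors. -/
noncomputable def ptr12 (M : Matrix (Fin n × Fin n × Fin m) (Fin n × Fin n × Fin m) ℂ) :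
    Matrix (Fin m) (Fin m) ℂ :=
  Matrix.of fun w w' => ∑ v : Fin n × Fin n, M (v.1, v.2, w) (v.1, v.2, w')

/-- Embed a matrix on the first two factors, acting as the identity on the third. -/
noncomputable def emb (n m : ℕ) (Z : Matrix (Fin n × Fin n) (Fin n × Fin n) ℂ) :
    Matrix (Fin n × Fin n × Fin m) (Fin n × Fin n × Fin m) ℂ :=
  Matrix.of fun i j => Z (i.1, i.2.1) (j.1, j.2.1) * (if i.2.2 = j.2.2 then (1 : ℂ) else 0)

lemma emb_mul (Z W : Matrix (Fin n × Fin n) (Fin n × Fin n) ℂ) :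
    emb n m (Z * W) = emb n m Z * emb n m W := by
  ext ⟨i1, i2, i3⟩ ⟨j1, j2, j3⟩
  simp [emb, Matrix.mul_apply, Fintype.sum_prod_type, mul_ite, ite_mul,
    Finset.mul_sum, mul_assoc]

lemma emb_one : emb n m (1 : Matrix (Fin n × Fin n) (Fin n × Fin n) ℂ) = 1 := by
  ext ⟨i1, i2, i3⟩ ⟨j1, j2, j3⟩
  simp [emb, Matrix.one_apply, Prod.ext_iff]
  aesop

lemma ptr12_comm (Z : Matrix (Fin n × Fin n) (Fin n × Fin n) ℂ)
    (M : Matrix (Fin n × Fin n × Fin m) (Fin n × Fin n × Fin m) ℂ) :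
    ptr12 (emb n m Z * M) = ptr12 (M * emb n m Z) := by
  ext w w'
  simp only [ptr12, emb, Matrix.mul_apply, Matrix.of_apply]
  rw [Finset.sum_comm]
  simp [Fintype.sum_prod_type, mul_ite, ite_mul, mul_comm]

lemma entry_AB (A B : Matrix (Fin n × Fin m) (Fin n × Fin m) ℂ)
    (v1 v2 : Fin n) (w w' : Fin m) :
    ((Matrix.of fun (i j : Fin n × Fin n × Fin m) =>
          A (i.1, i.2.2) (j.1, j.2.2) * (if i.2.1 = j.2.1 then (1 : ℂ) else 0)) *
        (Matrix.of fun (i j : Fin n × Fin n × Fin m) =>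
          B (i.2.1, i.2.2) (j.2.1, j.2.2) * (if i.1 = j.1 then (1 : ℂ) else 0)))
      (v1, v2, w) (v1, v2, w') =
    ∑ k3 : Fin m, A (v1, w) (v1, k3) * B (v2, k3) (v2, w') := by
  rw [Matrix.mul_apply, Fintype.sum_prod_type]
  rw [Finset.sum_eq_single v1 (fun b _ hb => by simp [hb]) (by simp)]
  rw [Fintype.sum_prod_type]
  rw [Finset.sum_eq_single v2 (fun b _ hb => by simp [Ne.symm hb]) (by simp)]
  simp

lemma entry_BA (A B : Matrix (Fin n × Fin m) (Fin n × Fin m) ℂ)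
    (v1 v2 : Fin n) (w w' : Fin m) :
    ((Matrix.of fun (i j : Fin n × Fin n × Fin m) =>
          B (i.2.1, i.2.2) (j.2.1, j.2.2) * (if i.1 = j.1 then (1 : ℂ) else 0)) *
        (Matrix.of fun (i j : Fin n × Fin n × Fin m) =>
          A (i.1, i.2.2) (j.1, j.2.2) * (if i.2.1 = j.2.1 then (1 : ℂ) else 0)))
      (v1, v2, w) (v1, v2, w') =
    ∑ k3 : Fin m, B (v2, w) (v2, k3) * A (v1, k3) (v1, w') := by
  rw [Matrix.mul_apply, Fintype.sum_prod_type]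
  rw [Finset.sum_eq_single v1 (fun b _ hb => by simp [Ne.symm hb]) (by simp)]
  rw [Fintype.sum_prod_type]
  rw [Finset.sum_eq_single v2 (fun b _ hb => by simp [hb]) (by simp)]
  simp

lemma ptr_AB (A B : Matrix (Fin n × Fin m) (Fin n × Fin m) ℂ) :
    ptr12 ((Matrix.of fun (i j : Fin n × Fin n × Fin m) =>
          A (i.1, i.2.2) (j.1, j.2.2) * (if i.2.1 = j.2.1 then (1 : ℂ) else 0)) *
        (Matrix.of fun (i j : Fin n × Fin n × Fin m) =>
          B (i.2.1, i.2.2) (j.2.1, j.2.2) * (if i.1 = j.1 then (1 : ℂ) else 0))) =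
    partialTrace₁ A * partialTrace₁ B := by
  ext w w'
  simp only [ptr12, Matrix.of_apply, entry_AB, Fintype.sum_prod_type]
  refine Eq.trans (Finset.sum_congr rfl fun v1 _ => Finset.sum_comm) ?_
  rw [Finset.sum_comm]
  simp only [partialTrace₁, Matrix.mul_apply, Matrix.of_apply, Finset.sum_mul, Finset.mul_sum]
  exact Finset.sum_congr rfl fun _ _ => Finset.sum_comm

lemma ptr_BA (A B : Matrix (Fin n × Fin m) (Fin n × Fin m) ℂ) :
    ptr12 ((Matrix.of fun (i j : Fin n × Fin n × Fin m) =>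
          B (i.2.1, i.2.2) (j.2.1, j.2.2) * (if i.1 = j.1 then (1 : ℂ) else 0)) *
        (Matrix.of fun (i j : Fin n × Fin n × Fin m) =>
          A (i.1, i.2.2) (j.1, j.2.2) * (if i.2.1 = j.2.1 then (1 : ℂ) else 0))) =
    partialTrace₁ B * partialTrace₁ A := by
  ext w w'
  simp only [ptr12, Matrix.of_apply, entry_BA, Fintype.sum_prod_type]
  refine Eq.trans (Finset.sum_congr rfl fun v1 _ => Finset.sum_comm) ?_
  rw [Finset.sum_comm]
  simp only [partialTrace₁, Matrix.mul_apply, Matrix.of_apply, Finset.sum_mul, Finset.mul_sum]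

end TMaux

/-- A conjugation-type Yang–Baxter relation `X₁₂ A₁₃ B₂₃ = B₂₃ A₁₃ X₁₂` with `X`
invertible implies that the transfer matrices (partial traces over the auxiliary
first factor) of `A` and `B` commute. -/
theorem transfer_matrices_commute (n m : ℕ) (hn : 0 < n) (hm : 0 < m)
    (A B : Matrix (Fin n × Fin m) (Fin n × Fin m) ℂ)
    (X : Matrix (Fin n × Fin n) (Fin n × Fin n) ℂ) (hX : IsUnit X)
    (hYB :
      (Matrix.of fun (i j : Fin n × Fin n × Fin m) =>
          X (i.1, i.2.1) (j.1, j.2.1) * (if i.2.2 = j.2.2 then (1 : ℂ) else 0)) *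
        (Matrix.of fun (i j : Fin n × Fin n × Fin m) =>
          A (i.1, i.2.2) (j.1, j.2.2) * (if i.2.1 = j.2.1 then (1 : ℂ) else 0)) *
        (Matrix.of fun (i j : Fin n × Fin n × Fin m) =>
          B (i.2.1, i.2.2) (j.2.1, j.2.2) * (if i.1 = j.1 then (1 : ℂ) else 0)) =
      (Matrix.of fun (i j : Fin n × Fin n × Fin m) =>
          B (i.2.1, i.2.2) (j.2.1, j.2.2) * (if i.1 = j.1 then (1 : ℂ) else 0)) *
        (Matrix.of fun (i j : Fin n × Fin n × Fin m) =>
          A (i.1, i.2.2) (j.1, j.2.2) * (if i.2.1 = j.2.1 then (1 : ℂ) else 0)) *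
        (Matrix.of fun (i j : Fin n × Fin n × Fin m) =>
          X (i.1, i.2.1) (j.1, j.2.1) * (if i.2.2 = j.2.2 then (1 : ℂ) else 0))) :
    partialTrace₁ A * partialTrace₁ B = partialTrace₁ B * partialTrace₁ A := by
  classical
  have hd : IsUnit X.det := (Matrix.isUnit_iff_isUnit_det X).mp hX
  have h1 : TMaux.emb n m X⁻¹ * TMaux.emb n m X = 1 := by
    rw [← TMaux.emb_mul, Matrix.nonsing_inv_mul X hd, TMaux.emb_one]
  have h2 : TMaux.emb n m X * TMaux.emb n m X⁻¹ = 1 := by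
    rw [← TMaux.emb_mul, Matrix.mul_nonsing_inv X hd, TMaux.emb_one]
  set A13 : Matrix (Fin n × Fin n × Fin m) (Fin n × Fin n × Fin m) ℂ :=
    Matrix.of fun i j => A (i.1, i.2.2) (j.1, j.2.2) * (if i.2.1 = j.2.1 then (1 : ℂ) else 0)
    with hA13
  set B23 : Matrix (Fin n × Fin n × Fin m) (Fin n × Fin n × Fin m) ℂ :=
    Matrix.of fun i j => B (i.2.1, i.2.2) (j.2.1, j.2.2) * (if i.1 = j.1 then (1 : ℂ) else 0)
    with hB23
  have hYB' : TMaux.emb n m X * A13 * B23 = B23 * A13 * TMaux.emb n m X := hYB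
  calc partialTrace₁ A * partialTrace₁ B
      = TMaux.ptr12 (A13 * B23) := (TMaux.ptr_AB A B).symm
    _ = TMaux.ptr12 (TMaux.emb n m X⁻¹ * (TMaux.emb n m X * A13 * B23)) := by
        rw [mul_assoc (TMaux.emb n m X) A13 B23,
          ← mul_assoc (TMaux.emb n m X⁻¹) (TMaux.emb n m X) (A13 * B23), h1, one_mul]
    _ = TMaux.ptr12 (TMaux.emb n m X⁻¹ * (B23 * A13 * TMaux.emb n m X)) := by rw [hYB']
    _ = TMaux.ptr12 (B23 * A13 * TMaux.emb n m X * TMaux.emb n m X⁻¹) :=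
        TMaux.ptr12_comm _ _
    _ = TMaux.ptr12 (B23 * A13) := by
        rw [mul_assoc (B23 * A13), h2, mul_one]
    _ = partialTrace₁ B * partialTrace₁ A := TMaux.ptr_BA A B
end
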